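/- arXiv:1009.1990 — 3 statements merged into one kernel-verified Lean document; each statement's English description precedes it below -/
import Mathlib

section
/- The threshold function T_n^{n+1} (which outputs 1 iff at least n of its n+1 inputs are 1) is monotone and 1-separating of degree n, but not 1-separating of degree n+1. -/
def SepOne {n : ℕ} (A : Finset (Fin n → Bool)) : Prop :=
  ∃ i : Fin n, ∀ x ∈ A, x i = true

def BoolFun.IsOneSeparatingOfDegree {n : ℕ} (f : (Fin n → Bool) → Bool) (m : ℕ) : Prop :=
  ∀ A : Finset (Fin n → Bool), (∀ x ∈ A, f x = true) → A.card = m → SepOne A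

def BoolFun.IsMonotone {n : ℕ} (f : (Fin n → Bool) → Bool) : Prop :=
  ∀ a b : Fin n → Bool, (∀ i, a i ≤ b i) → f a ≤ f b

/-- The threshold function `T_n^{n+1}`: true iff at least `n` of the `n+1` inputs are true. -/
def threshold (n : ℕ) : (Fin (n + 1) → Bool) → Bool :=
  fun x => decide (n ≤ (Finset.univ.filter (fun i => x i = true)).card)

lemma key_count (n : ℕ) (x : Fin (n+1) → Bool) :
    (Finset.univ.filter (fun i => x i = true)).card
      + (Finset.univ.filter (fun i => x i = false)).card = n + 1 := by
  have h := Finset.card_filter_add_card_filter_not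
    (s := (Finset.univ : Finset (Fin (n+1)))) (p := fun i => x i = true)
  have h2 : (Finset.univ.filter (fun i => ¬ x i = true))
      = Finset.univ.filter (fun i => x i = false) := by
    apply Finset.filter_congr; intro i _; simp
  rw [h2] at h
  simpa using h

theorem threshold_properties (n : ℕ) (hn : 2 ≤ n) :
    BoolFun.IsMonotone (threshold n) ∧
    BoolFun.IsOneSeparatingOfDegree (threshold n) n ∧
    ¬ BoolFun.IsOneSeparatingOfDegree (threshold n) (n + 1) := by
  refine ⟨?_, ?_, ?_⟩
  · intro a b hab
    rw [Bool.le_iff_imp]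
    intro ha
    simp only [threshold, decide_eq_true_iff] at ha ⊢
    refine le_trans ha (Finset.card_le_card ?_)
    intro i hi
    simp only [Finset.mem_filter, Finset.mem_univ, true_and] at hi ⊢
    have := hab i
    rw [hi] at this
    exact Bool.eq_true_of_true_le this
  · intro A hA hcard
    set B := A.biUnion (fun x => Finset.univ.filter (fun i => x i = false)) with hB
    have hBcard : B.card ≤ A.card * 1 := by
      apply Finset.card_biUnion_le_card_mul
      intro x hx
      have hx' := hA x hx
      simp only [threshold, decide_eq_true_iff] at hx'
      have := key_count n x
      omega
    have : ∃ i, i ∉ B := by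
      by_contra h
      push_neg at h
      have hsub : (Finset.univ : Finset (Fin (n+1))) ⊆ B := fun i _ => h i
      have := Finset.card_le_card hsub
      simp at this
      omega
    obtain ⟨i, hi⟩ := this
    refine ⟨i, fun x hx => ?_⟩
    by_contra hxi
    apply hi
    simp only [hB, Finset.mem_biUnion]
    exact ⟨x, hx, by simp [Bool.not_eq_true] at hxi; simp [hxi]⟩
  · intro h
    set e : Fin (n+1) → (Fin (n+1) → Bool) := fun j i => decide (i ≠ j) with he
    have hinj : Function.Injective e := by
      intro j j' hjj
      have := congrFun hjj j
      simp [he] at this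
      exact this
    set A := Finset.image e Finset.univ with hA
    have hcard : A.card = n + 1 := by
      rw [hA, Finset.card_image_of_injective _ hinj]
      simp
    have hthresh : ∀ x ∈ A, threshold n x = true := by
      intro x hx
      rw [hA] at hx
      simp only [Finset.mem_image, Finset.mem_univ, true_and] at hx
      obtain ⟨j, hj⟩ := hx
      subst hj
      simp only [threshold, decide_eq_true_iff]
      have : (Finset.univ.filter (fun i => e j i = true)) = Finset.univ.erase j := by
        ext i
        simp [he, Finset.mem_erase]
      rw [this, Finset.card_erase_of_mem (Finset.mem_univ j)]
      simp
    obtain ⟨i, hi⟩ := h A hthresh hcard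
    have : e i ∈ A := by simp [hA]
    have := hi (e i) this
    simp [he] at this
end

section
/- If all formulae in a default theory (premises, justifications, conclusions of defaults, and the facts W) are built solely from 1-reproducing connectives, then the theory has exactly one stable extension. -/
inductive Fml (V : Type) : Type
  | var : V → Fml V
  | app : (n : ℕ) → ((Fin n → Bool) → Bool) → (Fin n → Fml V) → Fml V

def Fml.eval {V : Type} (σ : V → Bool) : Fml V → Bool
  | .var v => σ v
  | .app _ f a => f (fun i => (a i).eval σ)

/-- Negation of a formula. -/
def Fml.neg {V : Type} (φ : Fml V) : Fml V :=
  .app 1 (fun x => !(x 0)) (fun _ => φ)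

/-- Classical deductive closure: the set of all semantic consequences of `E`. -/
def Th {V : Type} (E : Set (Fml V)) : Set (Fml V) :=
  {φ | ∀ σ : V → Bool, (∀ ψ ∈ E, ψ.eval σ = true) → φ.eval σ = true}

/-- A default rule `α : β / γ`. -/
structure DefaultRule (V : Type) where
  pre : Fml V
  just : Fml V
  concl : Fml V

/-- The approximating stages `Eᵢ` in the definition of a stable extension. -/
def stage {V : Type} (W : Set (Fml V)) (D : Set (DefaultRule V)) (E : Set (Fml V)) :
    ℕ → Set (Fml V)
  | 0 => W
  | i + 1 =>
      Th (stage W D E i) ∪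
        {γ | ∃ d ∈ D, d.concl = γ ∧ d.pre ∈ stage W D E i ∧ d.just.neg ∉ E}

/-- `E` is a stable extension of the default theory `(W, D)`. -/
def IsStableExtension {V : Type} (W : Set (Fml V)) (D : Set (DefaultRule V))
    (E : Set (Fml V)) : Prop :=
  E = ⋃ i, stage W D E i

/-- All connectives occurring in the formula are 1-reproducing. -/
def Fml.OnlyOneReproducing {V : Type} : Fml V → Prop
  | .var _ => True
  | .app _ f a => f (fun _ => true) = true ∧ ∀ i, (a i).OnlyOneReproducing


lemma eval_true_of_onerep {V : Type} (φ : Fml V) (h : φ.OnlyOneReproducing) :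
    φ.eval (fun _ => true) = true := by
  induction φ with
  | var v => rfl
  | app n f a ih =>
    obtain ⟨hf, ha⟩ := h
    show f (fun i => (a i).eval (fun _ => true)) = true
    have hfa : (fun i => (a i).eval (fun _ => true)) = fun _ => true := by
      funext i; exact ih i (ha i)
    rw [hfa]; exact hf

lemma neg_eval_false {V : Type} (φ : Fml V) (h : φ.OnlyOneReproducing) :
    φ.neg.eval (fun _ => true) = false := by
  simp [Fml.neg, Fml.eval, eval_true_of_onerep φ h]

lemma stage_eval_true {V : Type} (W : Set (Fml V)) (D : Set (DefaultRule V))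
    (hW : ∀ φ ∈ W, φ.OnlyOneReproducing)
    (hD : ∀ d ∈ D, d.pre.OnlyOneReproducing ∧ d.just.OnlyOneReproducing ∧
      d.concl.OnlyOneReproducing)
    (E : Set (Fml V)) :
    ∀ i, ∀ φ ∈ stage W D E i, φ.eval (fun _ => true) = true := by
  intro i
  induction i with
  | zero => intro φ hφ; exact eval_true_of_onerep φ (hW φ hφ)
  | succ i ih =>
    intro φ hφ
    rcases hφ with hφ | ⟨d, hd, hγ, _, _⟩
    · exact hφ (fun _ => true) ih
    · subst hγ; exact eval_true_of_onerep _ (hD d hd).2.2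

lemma stage_eq_empty {V : Type} (W : Set (Fml V)) (D : Set (DefaultRule V))
    (hD : ∀ d ∈ D, d.pre.OnlyOneReproducing ∧ d.just.OnlyOneReproducing ∧
      d.concl.OnlyOneReproducing)
    (E : Set (Fml V)) (hE : ∀ φ ∈ E, φ.eval (fun _ => true) = true) :
    ∀ i, stage W D E i = stage W D (∅ : Set (Fml V)) i := by
  intro i
  induction i with
  | zero => rfl
  | succ i ih =>
    show Th _ ∪ _ = Th _ ∪ _
    rw [ih]
    congr 1
    ext γ
    constructor
    · rintro ⟨d, hd, hγ, hpre, _⟩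
      exact ⟨d, hd, hγ, hpre, Set.notMem_empty _⟩
    · rintro ⟨d, hd, hγ, hpre, _⟩
      refine ⟨d, hd, hγ, hpre, fun hmem => ?_⟩
      have := hE _ hmem
      rw [neg_eval_false d.just (hD d hd).2.1] at this
      exact Bool.false_ne_true this

theorem oneReproducing_default_theory_unique_extension {V : Type}
    (W : Set (Fml V)) (D : Set (DefaultRule V))
    (hW : ∀ φ ∈ W, φ.OnlyOneReproducing)
    (hD : ∀ d ∈ D, d.pre.OnlyOneReproducing ∧ d.just.OnlyOneReproducing ∧
      d.concl.OnlyOneReproducing) :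
    ∃! E : Set (Fml V), IsStableExtension W D E := by
  have key : ∀ E : Set (Fml V), IsStableExtension W D E →
      E = ⋃ i, stage W D (∅ : Set (Fml V)) i := by
    intro E hE
    have hev : ∀ φ ∈ E, φ.eval (fun _ => true) = true := by
      intro φ hφ
      rw [hE] at hφ
      obtain ⟨_, ⟨i, rfl⟩, hφ⟩ := hφ
      exact stage_eval_true W D hW hD E i φ hφ
    rw [hE]
    exact Set.iUnion_congr (stage_eq_empty W D hD E hev)
  refine ⟨⋃ i, stage W D (∅ : Set (Fml V)) i, ?_, fun E hE => key E hE⟩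
  unfold IsStableExtension
  refine Eq.symm (Set.iUnion_congr ?_)
  apply stage_eq_empty W D hD
  intro φ hφ
  obtain ⟨_, ⟨i, rfl⟩, hφ⟩ := hφ
  exact stage_eval_true W D hW hD ∅ i φ hφ
end

section
/- The map φ ↦ φ ∧ ⋀_{xᵢ ∈ Vars(φ)} (xᵢ ⊕ yᵢ), with fresh variables yᵢ, is a bijection-inducing (parsimonious) transformation: the models of the resulting formula over Vars(φ) ∪ {yᵢ} are exactly its minimal models (w.r.t. the coordinatewise order), and they are in bijection with the models of φ; hence the number of minimal models of the image equals the number of models of φ. -/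
/-- Rename the variables of a formula. -/
def Fml.rename {V W : Type} (h : V → W) : Fml V → Fml W
  | .var v => .var (h v)
  | .app n f a => .app n f (fun i => (a i).rename h)

def trueSet {V : Type} (σ : V → Bool) : Set V := {v | σ v = true}

/-- `σ` is a minimal model of `ψ` w.r.t. the coordinatewise (set-inclusion) order. -/
def IsMinimalModel {V : Type} (ψ : Fml V) (σ : V → Bool) : Prop :=
  ψ.eval σ = true ∧
    ∀ σ' : V → Bool, ψ.eval σ' = true → trueSet σ' ⊆ trueSet σ → trueSet σ' = trueSet σ

/-- The formula `x_j ⊕ y_j` over variables `Fin n ⊕ Fin n`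
(`Sum.inl j` is `x_j`, `Sum.inr j` is `y_j`). -/
def xorPair (n : ℕ) (j : Fin n) : Fml (Fin n ⊕ Fin n) :=
  .app 2 (fun v => xor (v 0) (v 1))
    (fun k => if k = 0 then .var (Sum.inl j) else .var (Sum.inr j))

/-- The image `φ ∧ ⋀_{i} (x_i ⊕ y_i)` of `φ` under the transformation. -/
def parsimoniousImage {n : ℕ} (φ : Fml (Fin n)) : Fml (Fin n ⊕ Fin n) :=
  .app (n + 1) (fun v => decide (∀ i, v i = true))
    (Fin.cases (φ.rename Sum.inl) (fun j => xorPair n j))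

/-! A model of `φ ∧ ⋀ (xᵢ ⊕ yᵢ)` is a model `σ` of `φ` on the `x`'s together with its complement on
the `y`'s. Two such assignments cannot be strictly comparable, since shrinking the true set in one
`x`/`y` pair would make both false; so every model is minimal, and restriction to the `x`'s is a
bijection onto the models of `φ`. -/

theorem Fml.eval_rename {V W : Type} (h : V → W) (φ : Fml V) (σ : W → Bool) :
    (φ.rename h).eval σ = φ.eval (σ ∘ h) := by
  induction φ with
  | var v => rfl
  | app n f a ih => simp only [Fml.rename, Fml.eval, ih]

theorem eval_xorPair {n : ℕ} (j : Fin n) (τ : Fin n ⊕ Fin n → Bool) :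
    (xorPair n j).eval τ = xor (τ (.inl j)) (τ (.inr j)) := rfl

def IsComplementary {α : Type} (τ : α ⊕ α → Bool) : Prop :=
  ∀ j, τ (.inr j) = !τ (.inl j)

theorem eval_parsimoniousImage_eq_true_iff {n : ℕ} (φ : Fml (Fin n))
    (τ : Fin n ⊕ Fin n → Bool) :
    (parsimoniousImage φ).eval τ = true ↔
      φ.eval (τ ∘ Sum.inl) = true ∧ IsComplementary τ := by
  have hxor : ∀ a b : Bool, xor a b = true ↔ b = !a := by decide
  simp only [parsimoniousImage, Fml.eval, decide_eq_true_eq, Fin.forall_fin_succ,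
    Fin.cases_zero, Fin.cases_succ, Fml.eval_rename, eval_xorPair, hxor,
    IsComplementary]

theorem IsComplementary.eq_of_trueSet_subset {α : Type} {σ τ : α ⊕ α → Bool}
    (hσ : IsComplementary σ) (hτ : IsComplementary τ) (hsub : trueSet σ ⊆ trueSet τ) :
    σ = τ := by
  have hinl : ∀ j, σ (.inl j) = τ (.inl j) := by
    intro j
    cases h : σ (.inl j)
    · have : τ (.inr j) = true := hsub (show σ (.inr j) = true by simp [hσ j, h])
      simpa [hτ j] using this.symm
    · exact (hsub h).symm
  funext v
  rcases v with j | j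
  · exact hinl j
  · rw [hσ j, hτ j, hinl j]

def parsimoniousImageModelsEquiv {n : ℕ} (φ : Fml (Fin n)) :
    {σ : Fin n → Bool // φ.eval σ = true} ≃
      {τ : Fin n ⊕ Fin n → Bool // (parsimoniousImage φ).eval τ = true} where
  toFun σ := ⟨Sum.elim σ.1 (fun j => !σ.1 j),
    (eval_parsimoniousImage_eq_true_iff φ _).2 ⟨σ.2, fun _ => rfl⟩⟩
  invFun τ := ⟨τ.1 ∘ Sum.inl, ((eval_parsimoniousImage_eq_true_iff φ τ.1).1 τ.2).1⟩
  left_inv _ := rfl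
  right_inv τ := Subtype.ext <| funext fun
    | .inl _ => rfl
    | .inr j => (((eval_parsimoniousImage_eq_true_iff φ τ.1).1 τ.2).2 j).symm

theorem parsimonious_transformation {n : ℕ} (φ : Fml (Fin n)) :
    (∀ τ : Fin n ⊕ Fin n → Bool,
        (parsimoniousImage φ).eval τ = true ↔ IsMinimalModel (parsimoniousImage φ) τ) ∧
    Nonempty
      ({σ : Fin n → Bool // φ.eval σ = true} ≃
       {τ : Fin n ⊕ Fin n → Bool // (parsimoniousImage φ).eval τ = true}) := by
  refine ⟨fun τ => ⟨fun hτ => ⟨hτ, fun σ hσ hsub => ?_⟩, And.left⟩,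
    ⟨parsimoniousImageModelsEquiv φ⟩⟩
  rw [eval_parsimoniousImage_eq_true_iff] at hτ hσ
  rw [hσ.2.eq_of_trueSet_subset hτ.2 hsub]
end
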